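/- Let ℓ be a prime and m ≥ 1, i ≥ 1 integers. Then the commutator subgroup D_{i,m}' = [D_{i,m}, D_{i,m}] of the iterated wreath product D_{i,m} satisfies ℓ^((ℓ^i−1)/(ℓ−1) + i − 1) · k(D_{i,m}') ≥ m^(ℓ^i − 1), where (ℓ^i−1)/(ℓ−1) = 1 + ℓ + ⋯ + ℓ^{i−1} and k(D_{i,m}') denotes the number of conjugacy classes of the group D_{i,m}'. -/

import Mathlib

/-- The shift automorphism of `ZMod n → H` by `c : ZMod n`: `(c • f) x = f (x - c)`. -/
def shiftAut (H : Type*) [Group H] (n : ℕ) (c : ZMod n) : MulAut (ZMod n → H) where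
  toFun f := fun x => f (x - c)
  invFun f := fun x => f (x + c)
  left_inv f := funext fun x => by simp
  right_inv f := funext fun x => by simp
  map_mul' f g := rfl

/-- The action of the cyclic group `C_n = Multiplicative (ZMod n)` on `ZMod n → H`
by shifting: `(c • f) x = f (x - c)`. -/
def wreathAction (H : Type*) [Group H] (n : ℕ) :
    Multiplicative (ZMod n) →* MulAut (ZMod n → H) where
  toFun c := shiftAut H n c.toAdd
  map_one' := by
    ext f x
    show f (x - (1 : Multiplicative (ZMod n)).toAdd) = f x
    rw [toAdd_one, sub_zero]
  map_mul' c d := by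
    ext f x
    show f (x - (c.toAdd + d.toAdd)) = f (x - c.toAdd - d.toAdd)
    rw [sub_sub]

/-- The wreath product `H ≀ C_n`: the semidirect product `(ZMod n → H) ⋊ C_n`,
where `c ∈ C_n = ZMod n` acts on `f : ZMod n → H` by `(c • f) x = f (x - c)`. -/
abbrev WreathCyclic (H : Type*) [Group H] (n : ℕ) : Type _ :=
  SemidirectProduct (ZMod n → H) (Multiplicative (ZMod n)) (wreathAction H n)

/-- The iterated wreath product `D_{i,m} = C_m ≀ C_ℓ ≀ ⋯ ≀ C_ℓ` (with `i` factors `C_ℓ`),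
bundled together with its group structure. -/
noncomputable def iterWreathAux (ℓ m : ℕ) : ℕ → (T : Type) × Group T
  | 0 => ⟨Multiplicative (ZMod m), inferInstance⟩
  | i + 1 =>
    let p := iterWreathAux ℓ m i
    letI : Group p.1 := p.2
    ⟨WreathCyclic p.1 ℓ, inferInstance⟩

/-- The iterated wreath product `D_{i,m} = C_m ≀ C_ℓ ≀ ⋯ ≀ C_ℓ` with `i` factors `C_ℓ`. -/
noncomputable def IterWreath (ℓ m i : ℕ) : Type := (iterWreathAux ℓ m i).1

noncomputable instance (ℓ m i : ℕ) : Group (IterWreath ℓ m i) := (iterWreathAux ℓ m i).2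


/-! The base group `C_m^{ℓ^i}` of `D = D_{i,m}` contains the subgroup `N` of elements whose
coordinates multiply to `1`. It is abelian of order `m^{ℓ^i - 1}` and lies in `D'`: modulo
commutators, conjugating by the top cyclic factor moves any coordinate to position `0`, so an
element of the base is congruent to the element carrying the product of its coordinates in a
single position, and induction on `i` applies. An abelian subgroup `N ≤ D'` gives `|N|²`
commuting pairs, so `|N|² ≤ k(D') |D'|`. Finally `|D'| = |D| / |D/D'|`, where
`|D| = m^{ℓ^i} ℓ^{1 + ℓ + ⋯ + ℓ^{i-1}}` and `D` maps onto the abelian group `C_m × C_ℓ^i`. -/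

open Finset

section CommutingPairs

variable {G : Type*} [Group G] [Finite G]

theorem sq_card_le_card_conjClasses_mul_card {A : Type*} [CommGroup A] (f : A →* G)
    (hf : Function.Injective f) :
    Nat.card A ^ 2 ≤ Nat.card (ConjClasses G) * Nat.card G := by
  rw [← card_comm_eq_card_conjClasses_mul_card, sq, ← Nat.card_prod]
  exact Nat.card_le_card_of_injective (fun p => ⟨Prod.map f f p, (Commute.all p.1 p.2).map f⟩)
    fun _ _ h => hf.prodMap hf (congrArg Subtype.val h)

theorem sq_card_mul_card_abelianization_le {A : Type*} [CommGroup A] (f : A →* commutator G)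
    (hf : Function.Injective f) :
    Nat.card A ^ 2 * Nat.card (Abelianization G) ≤
      Nat.card (ConjClasses (commutator G)) * Nat.card G := by
  rw [← (commutator G).card_mul_index, ← mul_assoc]
  exact Nat.mul_le_mul_right _ (sq_card_le_card_conjClasses_mul_card f hf)

theorem card_le_card_abelianization_of_surjective {A : Type*} [CommGroup A] (f : G →* A)
    (hf : Function.Surjective f) : Nat.card A ≤ Nat.card (Abelianization G) :=
  Nat.card_le_card_of_surjective (Abelianization.lift f) fun a =>
    let ⟨g, hg⟩ := hf a
    ⟨Abelianization.of g, by rw [Abelianization.lift_apply_of, hg]⟩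

end CommutingPairs

def piProdHom (ι A : Type*) [Fintype ι] [CommMonoid A] : (ι → A) →* A where
  toFun g := ∏ x, g x
  map_one' := prod_const_one
  map_mul' _ _ := prod_mul_distrib

@[simp]
theorem piProdHom_apply {ι A : Type*} [Fintype ι] [CommMonoid A] (g : ι → A) :
    piProdHom ι A g = ∏ x, g x :=
  rfl

namespace WreathCyclic

variable (H : Type*) [Group H] (n : ℕ)

instance [Finite H] [NeZero n] : Finite (WreathCyclic H n) :=
  Finite.of_equiv _ SemidirectProduct.equivProd.symm

theorem card [NeZero n] : Nat.card (WreathCyclic H n) = Nat.card H ^ n * n := by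
  rw [SemidirectProduct.card, Nat.card_fun, Nat.card_zmod,
    Nat.card_congr Multiplicative.toAdd, Nat.card_zmod]

variable {H n}

theorem wreathAction_ofAdd_mulSingle (c : ZMod n) (a : H) :
    wreathAction H n (.ofAdd c) (Pi.mulSingle 0 a) = Pi.mulSingle c a := by
  funext x
  show (Pi.mulSingle 0 a : ZMod n → H) (x - c) = (Pi.mulSingle c a : ZMod n → H) x
  simp only [Pi.mulSingle_apply, sub_eq_zero]

theorem of_inl_mulSingle (c : ZMod n) (a : H) :
    Abelianization.of (SemidirectProduct.inl (Pi.mulSingle c a) : WreathCyclic H n) =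
      Abelianization.of (SemidirectProduct.inl (Pi.mulSingle 0 a)) := by
  rw [← wreathAction_ofAdd_mulSingle, SemidirectProduct.inl_aut, map_mul, map_mul, map_inv,
    map_inv, mul_inv_cancel_comm]

theorem of_inl [NeZero n] (u : ZMod n → H) :
    Abelianization.of (SemidirectProduct.inl u : WreathCyclic H n) =
      Abelianization.map
        (SemidirectProduct.inl.comp (MonoidHom.mulSingle (fun _ : ZMod n => H) 0))
        (∏ x, Abelianization.of (u x)) := by
  suffices (Abelianization.of.comp SemidirectProduct.inl : (ZMod n → H) →* _) =
      (Abelianization.map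
        (SemidirectProduct.inl.comp (MonoidHom.mulSingle (fun _ : ZMod n => H) 0))).comp
        ((piProdHom _ _).comp (MonoidHom.compLeft Abelianization.of _)) from
    DFunLike.congr_fun this u
  refine MonoidHom.pi_ext fun c a => ?_
  simp [of_inl_mulSingle, Abelianization.map_of, Pi.mulSingle_apply, apply_ite]

variable (H n) [NeZero n]

def toAbelianizationProd : WreathCyclic H n →* Abelianization H × Multiplicative (ZMod n) :=
  SemidirectProduct.lift
    ((MonoidHom.inl _ _).comp ((piProdHom _ _).comp (MonoidHom.compLeft Abelianization.of _)))
    (MonoidHom.inr _ _) fun c => MonoidHom.ext fun u => by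
      have shift_invariant : ∏ x, Abelianization.of (u (x - c.toAdd)) =
          ∏ x, Abelianization.of (u x) :=
        Equiv.prod_comp (Equiv.subRight c.toAdd) fun x => Abelianization.of (u x)
      simp only [MonoidHom.comp_apply, MulEquiv.coe_toMonoidHom, MulAut.conj_apply,
        mul_inv_cancel_comm]
      exact congrArg (MonoidHom.inl _ _) shift_invariant

theorem toAbelianizationProd_surjective : Function.Surjective (toAbelianizationProd H n) := by
  rintro ⟨a, c⟩
  obtain ⟨h, rfl⟩ : ∃ h, Abelianization.of h = a := QuotientGroup.mk_surjective a
  refine ⟨⟨Pi.mulSingle 0 h, c⟩, ?_⟩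
  simp [toAbelianizationProd, Pi.mulSingle_apply, apply_ite]

theorem card_abelianization_mul_le [Finite H] :
    Nat.card (Abelianization H) * n ≤ Nat.card (Abelianization (WreathCyclic H n)) := by
  simpa [Nat.card_congr Multiplicative.toAdd] using
    card_le_card_abelianization_of_surjective _ (toAbelianizationProd_surjective H n)

end WreathCyclic

namespace IterWreath

variable (ℓ m : ℕ) [NeZero ℓ]

instance instFinite [NeZero m] : ∀ i, Finite (IterWreath ℓ m i)
  | 0 => inferInstanceAs (Finite (Multiplicative (ZMod m)))
  | i + 1 =>
    haveI := instFinite i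
    inferInstanceAs (Finite (WreathCyclic (IterWreath ℓ m i) ℓ))

theorem card [NeZero m] :
    ∀ i, Nat.card (IterWreath ℓ m i) = m ^ ℓ ^ i * ℓ ^ ∑ j ∈ range i, ℓ ^ j
  | 0 => by simp [IterWreath, iterWreathAux]
  | i + 1 => by
    rw [show IterWreath ℓ m (i + 1) = WreathCyclic (IterWreath ℓ m i) ℓ from rfl,
      WreathCyclic.card, card, sum_range_succ']
    simp only [pow_succ, ← sum_mul]
    ring

theorem le_card_abelianization [NeZero m] :
    ∀ i, m * ℓ ^ i ≤ Nat.card (Abelianization (IterWreath ℓ m i))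
  | 0 => show m * ℓ ^ 0 ≤ Nat.card (Abelianization (Multiplicative (ZMod m))) by
    simpa [Nat.card_congr Multiplicative.toAdd] using
      card_le_card_abelianization_of_surjective (MonoidHom.id (Multiplicative (ZMod m)))
        Function.surjective_id
  | i + 1 => calc
      m * ℓ ^ (i + 1) = m * ℓ ^ i * ℓ := by ring
      _ ≤ Nat.card (Abelianization (IterWreath ℓ m i)) * ℓ :=
        Nat.mul_le_mul_right _ (le_card_abelianization i)
      _ ≤ _ := WreathCyclic.card_abelianization_mul_le (IterWreath ℓ m i) ℓ

end IterWreath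

/-- The base group `C_m^{ℓ^i}` of `D_{i,m}`. -/
def IterWreathBase (ℓ m : ℕ) : ℕ → Type
  | 0 => Multiplicative (ZMod m)
  | i + 1 => ZMod ℓ → IterWreathBase ℓ m i

namespace IterWreathBase

variable (ℓ m : ℕ)

instance instCommGroup : ∀ i, CommGroup (IterWreathBase ℓ m i)
  | 0 => inferInstanceAs (CommGroup (Multiplicative (ZMod m)))
  | i + 1 =>
    letI := instCommGroup i
    inferInstanceAs (CommGroup (ZMod ℓ → IterWreathBase ℓ m i))

noncomputable def incl : ∀ i, IterWreathBase ℓ m i →* IterWreath ℓ m i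
  | 0 => MonoidHom.id _
  | i + 1 =>
    show (ZMod ℓ → IterWreathBase ℓ m i) →* WreathCyclic (IterWreath ℓ m i) ℓ from
    SemidirectProduct.inl.comp (MonoidHom.compLeft (incl i) (ZMod ℓ))

theorem incl_injective : ∀ i, Function.Injective (incl ℓ m i)
  | 0 => Function.injective_id
  | i + 1 => fun _ _ h =>
    funext fun x => incl_injective i (congrFun (SemidirectProduct.inl_injective h) x)

variable [NeZero ℓ]

def norm : ∀ i, IterWreathBase ℓ m i →* Multiplicative (ZMod m)
  | 0 => MonoidHom.id _
  | i + 1 => (norm i).comp (piProdHom (ZMod ℓ) (IterWreathBase ℓ m i))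

theorem norm_surjective : ∀ i, Function.Surjective (norm ℓ m i)
  | 0 => Function.surjective_id
  | i + 1 => fun t => by
    obtain ⟨b, rfl⟩ := norm_surjective i t
    refine ⟨Pi.mulSingle 0 b, ?_⟩
    show norm ℓ m i (∏ x, (Pi.mulSingle 0 b : ZMod ℓ → IterWreathBase ℓ m i) x) = norm ℓ m i b
    rw [Fintype.prod_pi_mulSingle']

theorem card : ∀ i, Nat.card (IterWreathBase ℓ m i) = m ^ ℓ ^ i
  | 0 => by simp [IterWreathBase, Nat.card_congr Multiplicative.toAdd]
  | i + 1 => by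
    rw [show IterWreathBase ℓ m (i + 1) = (ZMod ℓ → IterWreathBase ℓ m i) from rfl,
      Nat.card_fun, card, Nat.card_zmod, ← pow_mul, ← pow_succ]

theorem card_ker_norm [NeZero m] (i : ℕ) : Nat.card (norm ℓ m i).ker = m ^ (ℓ ^ i - 1) := by
  have h := (norm ℓ m i).ker.card_mul_index
  rw [Subgroup.index_ker, MonoidHom.range_eq_top.mpr (norm_surjective ℓ m i),
    Subgroup.card_top, Nat.card_congr Multiplicative.toAdd, Nat.card_zmod, card,
    ← Nat.sub_add_cancel (Nat.one_le_pow _ _ (NeZero.pos ℓ)), pow_succ] at h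
  exact Nat.eq_of_mul_eq_mul_right (NeZero.pos m) h

theorem incl_mem_commutator :
    ∀ i {g : IterWreathBase ℓ m i}, g ∈ (norm ℓ m i).ker → incl ℓ m i g ∈ commutator _
  | 0, g, hg => by
    rw [MonoidHom.mem_ker] at hg
    rw [show g = 1 from hg, map_one]
    exact one_mem _
  | i + 1, g, hg => by
    have hprod : incl ℓ m i (∏ x, g x) ∈ commutator _ := incl_mem_commutator i hg
    rw [← Abelianization.ker_of, MonoidHom.mem_ker] at hprod ⊢
    show Abelianization.of (SemidirectProduct.inl fun x => incl ℓ m i (g x) :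
      WreathCyclic (IterWreath ℓ m i) ℓ) = 1
    have hmap := map_prod (Abelianization.of.comp (incl ℓ m i)) g univ
    simp only [MonoidHom.comp_apply] at hmap
    rw [WreathCyclic.of_inl, ← hmap, hprod, map_one]

noncomputable def kerNormToCommutator (i : ℕ) :
    (norm ℓ m i).ker →* commutator (IterWreath ℓ m i) :=
  ((incl ℓ m i).comp (norm ℓ m i).ker.subtype).codRestrict _ fun g =>
    incl_mem_commutator ℓ m i g.2

theorem kerNormToCommutator_injective (i : ℕ) : Function.Injective (kerNormToCommutator ℓ m i) :=
  fun _ _ h => Subtype.ext (incl_injective ℓ m i (congrArg Subtype.val h))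

end IterWreathBase

theorem card_conjClasses_commutator_iterWreath (ℓ : ℕ) (hℓ : ℓ.Prime) (m : ℕ) (hm : 1 ≤ m)
    (i : ℕ) (hi : 1 ≤ i) :
    m ^ (ℓ ^ i - 1) ≤
      ℓ ^ ((ℓ ^ i - 1) / (ℓ - 1) + i - 1) *
        Nat.card (ConjClasses (commutator (IterWreath ℓ m i))) := by
  have : NeZero ℓ := ⟨hℓ.ne_zero⟩
  have : NeZero m := ⟨by omega⟩
  set k := Nat.card (ConjClasses (commutator (IterWreath ℓ m i)))
  set a := m ^ (ℓ ^ i - 1)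
  set S := ∑ j ∈ range i, ℓ ^ j
  have hcount := sq_card_mul_card_abelianization_le _
    (IterWreathBase.kerNormToCommutator_injective ℓ m i)
  rw [IterWreathBase.card_ker_norm, IterWreath.card] at hcount
  have ham : m ^ ℓ ^ i = a * m := by
    rw [← pow_succ, Nat.sub_add_cancel (Nat.one_le_pow _ _ hℓ.pos)]
  have hbound : a * ℓ ^ i ≤ k * ℓ ^ S := by
    refine Nat.le_of_mul_le_mul_left ?_ (by positivity : 0 < a * m)
    calc a * m * (a * ℓ ^ i) = a ^ 2 * (m * ℓ ^ i) := by ring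
      _ ≤ a ^ 2 * Nat.card (Abelianization (IterWreath ℓ m i)) :=
        Nat.mul_le_mul_left _ (IterWreath.le_card_abelianization ℓ m i)
      _ ≤ k * (m ^ ℓ ^ i * ℓ ^ S) := hcount
      _ = a * m * (k * ℓ ^ S) := by rw [ham]; ring
  rw [← Nat.geomSum_eq hℓ.two_le]
  calc a ≤ a * ℓ ^ i := Nat.le_mul_of_pos_right _ (pow_pos hℓ.pos i)
    _ ≤ k * ℓ ^ S := hbound
    _ ≤ ℓ ^ (S + i - 1) * k := by
      rw [mul_comm]
      exact Nat.mul_le_mul_right _ (Nat.pow_le_pow_right hℓ.pos (by omega))
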